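/- arXiv:2502.00179 — 2 statements merged into one kernel-verified Lean document; each statement's English description precedes it below -/
import Mathlib

section
/- Let (M_k) be any family of ℂ-linear maps on d^n × d^n complex matrices indexed by k ∈ (ℤ/dℤ)^n, and let M̂_k be its randomized compilation. Then for every k ∈ (ℤ/dℤ)^n and every d^n × d^n complex matrix ρ, M̂_k(ρ) = d^{-2n} · Σ_{s,t ∈ (ℤ/dℤ)^n} χ_k(s−t) · ν̃_{s,t}(M) · Tr((Z^s)† ρ) · Z^t. -/
open scoped BigOperators
open Matrix

/-- Index set `(ℤ/dℤ)^n`. -/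
abbrev QIdx (d n : ℕ) := Fin n → ZMod d

/-- `d^n × d^n` complex matrices, indexed by `(ℤ/dℤ)^n`. -/
abbrev QMat (d n : ℕ) := Matrix (QIdx d n) (QIdx d n) ℂ

/-- The character `χ_z(j) = exp(2πi (z·j) / d)`. -/
noncomputable def chi (d n : ℕ) (z j : QIdx d n) : ℂ :=
  Complex.exp (2 * Real.pi * Complex.I * ((∑ i, (z i).val * (j i).val : ℕ) : ℂ) / d)

/-- The Weyl operator `X^x`, acting by `X^x |j⟩ = |j + x⟩`. -/
noncomputable def WX (d n : ℕ) (x : QIdx d n) : QMat d n :=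
  Matrix.of fun a b => if a = b + x then (1 : ℂ) else 0

/-- The Weyl operator `Z^z`, acting by `Z^z |j⟩ = χ_z(j) |j⟩`. -/
noncomputable def WZ (d n : ℕ) (z : QIdx d n) : QMat d n :=
  Matrix.diagonal fun j => chi d n z j

/-- The generalized Pauli fidelities
`ν̃_{s,t}(M) = d^{-n} Σ_k χ_k(s−t)^* Tr((Z^t)† M_k(Z^s))`. -/
noncomputable def gpf (d n : ℕ) [NeZero d]
    (M : QIdx d n → (QMat d n →ₗ[ℂ] QMat d n)) (s t : QIdx d n) : ℂ :=
  (1 / (d : ℂ) ^ n) *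
    ∑ k : QIdx d n, (starRingEnd ℂ) (chi d n k (s - t)) * ((WZ d n t)ᴴ * M k (WZ d n s)).trace

/-- The randomized compilation
`M̂_k = d^{-3n} Σ_{a,b,x} 𝒳^x ∘ 𝒵^a ∘ M_{k−x} ∘ 𝒵^b ∘ 𝒳^{−x}`. -/
noncomputable def rc (d n : ℕ) [NeZero d]
    (M : QIdx d n → (QMat d n →ₗ[ℂ] QMat d n)) (k : QIdx d n) (ρ : QMat d n) : QMat d n :=
  (1 / (d : ℂ) ^ (3 * n)) •
    ∑ a : QIdx d n, ∑ b : QIdx d n, ∑ x : QIdx d n,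
      WX d n x * WZ d n a *
        (M (k - x) (WZ d n b * (WX d n (-x) * ρ * (WX d n (-x))ᴴ) * (WZ d n b)ᴴ)) *
        (WZ d n a)ᴴ * (WX d n x)ᴴ

noncomputable def zeta (d : ℕ) : ℂ := Complex.exp (2 * Real.pi * Complex.I / d)

section Zeta
variable (d : ℕ) [NeZero d]

lemma zeta_pow_d : zeta d ^ d = 1 := by
  have hd : (d : ℂ) ≠ 0 := Nat.cast_ne_zero.mpr (NeZero.ne d)
  rw [zeta, ← Complex.exp_nat_mul]
  rw [show (d : ℂ) * (2 * Real.pi * Complex.I / d) = 2 * Real.pi * Complex.I by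
    field_simp]
  exact Complex.exp_two_pi_mul_I

lemma zeta_pow_mod (a : ℕ) : zeta d ^ (a % d) = zeta d ^ a := by
  conv_rhs => rw [← Nat.div_add_mod a d]
  rw [pow_add, pow_mul, zeta_pow_d, one_pow, one_mul]

lemma zeta_pow_val_natCast (a : ℕ) : zeta d ^ ((a : ZMod d)).val = zeta d ^ a := by
  rw [ZMod.val_natCast, zeta_pow_mod]

lemma zeta_pow_val_add (a b : ZMod d) :
    zeta d ^ (a + b).val = zeta d ^ a.val * zeta d ^ b.val := by
  have h : a + b = (((a.val + b.val : ℕ)) : ZMod d) := by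
    push_cast [ZMod.natCast_val, ZMod.cast_id]
    rfl
  rw [h, zeta_pow_val_natCast, pow_add]

lemma conj_zeta_pow_val (a : ZMod d) :
    (starRingEnd ℂ) (zeta d ^ a.val) = zeta d ^ (-a).val := by
  have h1 : (starRingEnd ℂ) (zeta d) * zeta d = 1 := by
    rw [zeta, ← Complex.exp_conj, ← Complex.exp_add]
    have h : (starRingEnd ℂ) (2 * Real.pi * Complex.I / d) = -(2 * Real.pi * Complex.I / d) := by
      simp only [map_div₀, _root_.map_mul, Complex.conj_I, Complex.conj_ofReal, map_ofNat, map_natCast]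
      ring
    rw [h, neg_add_cancel, Complex.exp_zero]
  have h2 : zeta d ^ (-a).val * zeta d ^ a.val = 1 := by
    rw [← zeta_pow_val_add, neg_add_cancel, ZMod.val_zero, pow_zero]
  have h3 : (starRingEnd ℂ) (zeta d ^ a.val) * zeta d ^ a.val = 1 := by
    rw [map_pow, ← mul_pow, h1, one_pow]
  have hne : zeta d ^ a.val ≠ 0 := pow_ne_zero _ (Complex.exp_ne_zero _)
  exact mul_right_cancel₀ hne (h3.trans h2.symm)

lemma zeta_pow_val_sum {ι : Type*} (s : Finset ι) (f : ι → ZMod d) :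
    zeta d ^ (∑ i ∈ s, f i).val = ∏ i ∈ s, zeta d ^ (f i).val := by
  classical
  induction s using Finset.cons_induction with
  | empty => simp
  | cons i s hi ih =>
    rw [Finset.sum_cons, Finset.prod_cons, zeta_pow_val_add, ih]

end Zeta

section Chi
variable (d n : ℕ) [NeZero d]

lemma chi_eq_zeta (z j : QIdx d n) :
    chi d n z j = zeta d ^ ((∑ i, z i * j i : ZMod d)).val := by
  have h1 : chi d n z j = zeta d ^ (∑ i, (z i).val * (j i).val) := by
    rw [chi, zeta, ← Complex.exp_nat_mul]
    ring_nf
  have h2 : (∑ i, z i * j i : ZMod d) = (((∑ i, (z i).val * (j i).val : ℕ)) : ZMod d) := by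
    push_cast [ZMod.natCast_val, ZMod.cast_id]
    rfl
  rw [h1, h2, zeta_pow_val_natCast]

lemma chi_comm (z j : QIdx d n) : chi d n z j = chi d n j z := by
  rw [chi_eq_zeta, chi_eq_zeta]
  congr 2
  exact Finset.sum_congr rfl fun i _ => mul_comm _ _

lemma chi_zero_right (z : QIdx d n) : chi d n z 0 = 1 := by
  rw [chi_eq_zeta]
  simp

lemma chi_add_right (z j j' : QIdx d n) :
    chi d n z (j + j') = chi d n z j * chi d n z j' := by
  rw [chi_eq_zeta, chi_eq_zeta, chi_eq_zeta, ← zeta_pow_val_add]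
  congr 2
  rw [← Finset.sum_add_distrib]
  exact Finset.sum_congr rfl fun i _ => by rw [Pi.add_apply, mul_add]

lemma chi_conj (z j : QIdx d n) :
    (starRingEnd ℂ) (chi d n z j) = chi d n z (-j) := by
  rw [chi_eq_zeta, chi_eq_zeta, conj_zeta_pow_val]
  congr 2
  rw [← Finset.sum_neg_distrib]
  exact Finset.sum_congr rfl fun i _ => by rw [Pi.neg_apply, mul_neg]

omit [NeZero d] in
lemma chi_ne_zero (z j : QIdx d n) : chi d n z j ≠ 0 := Complex.exp_ne_zero _

lemma chi_mul_conj (z j j' : QIdx d n) :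
    chi d n z j * (starRingEnd ℂ) (chi d n z j') = chi d n z (j - j') := by
  rw [chi_conj, ← chi_add_right, sub_eq_add_neg]

end Chi

section Orth
variable (d : ℕ) [NeZero d]

lemma zmod_char_sum (m : ZMod d) :
    ∑ c : ZMod d, zeta d ^ (c * m).val = if m = 0 then (d : ℂ) else 0 := by
  have key : ∀ c : ZMod d, zeta d ^ (c * m).val = (zeta d ^ m.val) ^ c.val := by
    intro c
    have h : c * m = (((c.val * m.val : ℕ)) : ZMod d) := by
      push_cast [ZMod.natCast_val, ZMod.cast_id]
      rfl
    rw [h, zeta_pow_val_natCast, ← pow_mul, mul_comm]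
  simp only [key]
  have hsum : ∑ c : ZMod d, (zeta d ^ m.val) ^ c.val
      = ∑ j ∈ Finset.range d, (zeta d ^ m.val) ^ j := by
    obtain ⟨e, rfl⟩ := Nat.exists_eq_succ_of_ne_zero (NeZero.ne d)
    exact Fin.sum_univ_eq_sum_range _ _
  rw [hsum]
  by_cases hm : m = 0
  · simp [hm]
  · have hprim : IsPrimitiveRoot (zeta d) d :=
      Complex.isPrimitiveRoot_exp d (NeZero.ne d)
    have hne1 : zeta d ^ m.val ≠ 1 := by
      intro h
      have := hprim.pow_ne_one_of_pos_of_lt (ZMod.val_pos.mpr hm).ne' (ZMod.val_lt m)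
      exact this h
    rw [geom_sum_eq hne1, ← pow_mul, mul_comm m.val d, pow_mul, zeta_pow_d,
      one_pow, sub_self, zero_div, if_neg hm]

lemma chi_sum (n : ℕ) (m : QIdx d n) :
    ∑ b : QIdx d n, chi d n b m = if m = 0 then (d : ℂ) ^ n else 0 := by
  classical
  have key : ∀ b : QIdx d n, chi d n b m = ∏ i, zeta d ^ ((b i * m i).val) := by
    intro b
    rw [chi_eq_zeta, zeta_pow_val_sum]
  simp only [key]
  have step : ∑ x : QIdx d n, ∏ i : Fin n, zeta d ^ (x i * m i).val
      = ∏ i : Fin n, ∑ c : ZMod d, zeta d ^ (c * m i).val := by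
    rw [← Finset.sum_prod_piFinset (Finset.univ : Finset (ZMod d))
      (fun i c => zeta d ^ (c * m i).val), Fintype.piFinset_univ]
  rw [step]
  have : ∀ i : Fin n, (∑ c : ZMod d, zeta d ^ (c * m i).val)
      = if m i = 0 then (d : ℂ) else 0 := fun i => zmod_char_sum d (m i)
  simp only [this]
  by_cases hm : m = 0
  · simp [hm]
  · rw [if_neg hm]
    obtain ⟨i, hi⟩ : ∃ i, m i ≠ 0 := by
      by_contra h
      push_neg at h
      exact hm (funext h)
    exact Finset.prod_eq_zero (Finset.mem_univ i) (by rw [if_neg hi])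

end Orth

set_option linter.unusedSectionVars false


section Mat
variable (d n : ℕ) [NeZero d]

lemma WZ_conjT (z : QIdx d n) :
    (WZ d n z)ᴴ = Matrix.diagonal fun j => (starRingEnd ℂ) (chi d n z j) := by
  rw [WZ, Matrix.diagonal_conjTranspose]
  rfl

lemma WZ_apply (z : QIdx d n) (i j : QIdx d n) :
    WZ d n z i j = if i = j then chi d n z i else 0 := by
  rw [WZ, Matrix.diagonal_apply]

lemma traceZ (s : QIdx d n) (σ : QMat d n) :
    ((WZ d n s)ᴴ * σ).trace = ∑ p, (starRingEnd ℂ) (chi d n s p) * σ p p := by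
  rw [WZ_conjT]
  simp [Matrix.trace, Matrix.diag, Matrix.diagonal_mul]

lemma zconj_apply (a : QIdx d n) (σ : QMat d n) (i j : QIdx d n) :
    (WZ d n a * σ * (WZ d n a)ᴴ) i j
      = chi d n a i * σ i j * (starRingEnd ℂ) (chi d n a j) := by
  rw [WZ_conjT, WZ]
  simp [Matrix.mul_diagonal, Matrix.diagonal_mul]


lemma zsum (σ : QMat d n) :
    ∑ b : QIdx d n, WZ d n b * σ * (WZ d n b)ᴴ
      = ((d : ℂ) ^ n) • Matrix.diagonal (fun i => σ i i) := by
  ext i j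
  rw [Matrix.sum_apply]
  simp only [zconj_apply]
  have : ∀ b : QIdx d n, chi d n b i * σ i j * (starRingEnd ℂ) (chi d n b j)
      = chi d n b (i - j) * σ i j := by
    intro b
    rw [mul_right_comm, chi_mul_conj]
  simp only [this]
  rw [← Finset.sum_mul, chi_sum]
  by_cases h : i = j
  · subst h
    simp [Matrix.smul_apply, Matrix.diagonal_apply, mul_comm]
  · have : i - j ≠ 0 := sub_ne_zero.mpr h
    simp [this, Matrix.smul_apply, Matrix.diagonal_apply, h]

lemma diag_expand (σ : QMat d n) :
    Matrix.diagonal (fun i => σ i i)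
      = (1 / (d : ℂ) ^ n) • ∑ s : QIdx d n, ((WZ d n s)ᴴ * σ).trace • WZ d n s := by
  have hdn : ((d : ℂ) ^ n) ≠ 0 := pow_ne_zero _ (Nat.cast_ne_zero.mpr (NeZero.ne d))
  ext i j
  rw [Matrix.smul_apply, Matrix.sum_apply]
  simp only [Matrix.smul_apply, smul_eq_mul, traceZ, WZ_apply]
  by_cases h : i = j
  · subst h
    simp only [eq_self_iff_true, if_true]
    have : ∀ s : QIdx d n, (∑ p, (starRingEnd ℂ) (chi d n s p) * σ p p) * chi d n s i
        = ∑ p, chi d n s (i - p) * σ p p := by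
      intro s
      rw [Finset.sum_mul]
      exact Finset.sum_congr rfl fun p _ => by
        rw [mul_right_comm, mul_comm ((starRingEnd ℂ) (chi d n s p)), chi_mul_conj]
    simp only [this]
    rw [Finset.sum_comm]
    have : ∀ p : QIdx d n, ∑ s : QIdx d n, chi d n s (i - p) * σ p p
        = (if i - p = 0 then (d:ℂ)^n else 0) * σ p p := by
      intro p
      rw [← Finset.sum_mul]
      congr 1
      calc ∑ s : QIdx d n, chi d n s (i - p) = ∑ s : QIdx d n, chi d n (i - p) s :=
            Finset.sum_congr rfl fun s _ => chi_comm d n s (i - p)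
        _ = _ := by
            rw [show (∑ s : QIdx d n, chi d n (i-p) s) = ∑ s : QIdx d n, chi d n s (i-p) from
              Finset.sum_congr rfl fun s _ => chi_comm d n (i-p) s]
            exact chi_sum d n (i - p)
    simp only [this, sub_eq_zero, ite_mul, zero_mul]
    rw [Finset.sum_ite_eq]
    simp only [Finset.mem_univ, if_pos, Matrix.diagonal_apply_eq]
    field_simp
  · simp only [if_neg h, mul_zero, Finset.sum_const_zero, smul_zero]
    rw [Matrix.diagonal_apply_ne _ h]


lemma WX_mul_apply (x : QIdx d n) (A : QMat d n) (i j : QIdx d n) :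
    (WX d n x * A) i j = A (i - x) j := by
  rw [Matrix.mul_apply]
  have : ∀ p : QIdx d n, WX d n x i p * A p j = if i - x = p then A p j else 0 := by
    intro p
    rw [WX]
    simp only [Matrix.of_apply]
    by_cases h : i = p + x
    · rw [if_pos h, if_pos (by rw [h]; abel), one_mul]
    · rw [if_neg h, if_neg (fun hc => h (by rw [← hc]; abel)), zero_mul]
  simp only [this]
  rw [Finset.sum_ite_eq]
  simp

lemma mul_WXconjT_apply (x : QIdx d n) (A : QMat d n) (i j : QIdx d n) :
    (A * (WX d n x)ᴴ) i j = A i (j - x) := by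
  rw [Matrix.mul_apply]
  have : ∀ q : QIdx d n, A i q * ((WX d n x)ᴴ) q j = if j - x = q then A i q else 0 := by
    intro q
    rw [Matrix.conjTranspose_apply, WX]
    simp only [Matrix.of_apply]
    by_cases h : j = q + x
    · rw [if_pos h, if_pos (by rw [h]; abel), star_one, mul_one]
    · rw [if_neg h, if_neg (fun hc => h (by rw [← hc]; abel)), star_zero, mul_zero]
  simp only [this]
  rw [Finset.sum_ite_eq]
  simp

lemma xconj_apply (x : QIdx d n) (A : QMat d n) (i j : QIdx d n) :
    (WX d n x * A * (WX d n x)ᴴ) i j = A (i - x) (j - x) := by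
  rw [mul_WXconjT_apply, WX_mul_apply]

lemma traceC (s x : QIdx d n) (ρ : QMat d n) :
    ((WZ d n s)ᴴ * (WX d n (-x) * ρ * (WX d n (-x))ᴴ)).trace
      = chi d n s x * ((WZ d n s)ᴴ * ρ).trace := by
  rw [traceZ, traceZ, Finset.mul_sum]
  simp only [xconj_apply, sub_neg_eq_add]
  refine Fintype.sum_equiv (Equiv.addRight x) _ _ (fun p => ?_)
  simp only [Equiv.coe_addRight]
  have h : chi d n s x * (starRingEnd ℂ) (chi d n s (p + x)) = (starRingEnd ℂ) (chi d n s p) := by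
    rw [chi_conj, chi_conj, ← chi_add_right]
    congr 1
    abel
  rw [← h]
  ring

lemma xzx (x t : QIdx d n) :
    WX d n x * WZ d n t * (WX d n x)ᴴ = (starRingEnd ℂ) (chi d n t x) • WZ d n t := by
  ext i j
  rw [xconj_apply, Matrix.smul_apply, WZ_apply, WZ_apply, smul_eq_mul]
  by_cases h : i = j
  · subst h
    rw [if_pos rfl, if_pos rfl, chi_conj, show i - x = i + (-x) from sub_eq_add_neg _ _,
      chi_add_right, mul_comm]
  · rw [if_neg (fun hc => h (sub_left_inj.mp hc)), if_neg h, mul_zero]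

end Mat

lemma sum3_comm {α : Type*} [Fintype α] {Mo : Type*} [AddCommMonoid Mo]
    (f : α → α → α → Mo) :
    (∑ a : α, ∑ b : α, ∑ x : α, f a b x) = ∑ x : α, ∑ a : α, ∑ b : α, f a b x := by
  calc (∑ a : α, ∑ b : α, ∑ x : α, f a b x)
      = ∑ a : α, ∑ x : α, ∑ b : α, f a b x :=
        Finset.sum_congr rfl fun a _ => Finset.sum_comm
    _ = ∑ x : α, ∑ a : α, ∑ b : α, f a b x := Finset.sum_comm


/-- The randomized compilation of an instrument satisfies
`M̂_k(ρ) = d^{-2n} Σ_{s,t} χ_k(s−t) ν̃_{s,t}(M) Tr((Z^s)† ρ) Z^t`. -/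
theorem rc_eq_character_expansion
    (d n : ℕ) [NeZero d] (hd : 2 ≤ d) (hn : 1 ≤ n)
    (M : QIdx d n → (QMat d n →ₗ[ℂ] QMat d n))
    (k : QIdx d n) (ρ : QMat d n) :
    rc d n M k ρ =
      (1 / (d : ℂ) ^ (2 * n)) •
        ∑ s : QIdx d n, ∑ t : QIdx d n,
          (chi d n k (s - t) * gpf d n M s t * ((WZ d n s)ᴴ * ρ).trace) • WZ d n t := by
  classical
  have hdC : ((d : ℂ)) ≠ 0 := Nat.cast_ne_zero.mpr (NeZero.ne d)
  have hdn : ((d : ℂ) ^ n) ≠ 0 := pow_ne_zero _ hdC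
  have hcancel : (d : ℂ) ^ n * (1 / (d : ℂ) ^ n) = 1 := by field_simp
  -- Step 1: the inner `b`-average
  have inner : ∀ x : QIdx d n,
      (∑ b : QIdx d n,
        M (k - x) (WZ d n b * (WX d n (-x) * ρ * (WX d n (-x))ᴴ) * (WZ d n b)ᴴ))
      = ∑ s : QIdx d n,
          (chi d n s x * ((WZ d n s)ᴴ * ρ).trace) • M (k - x) (WZ d n s) := by
    intro x
    rw [← map_sum, zsum d n, diag_expand d n, smul_smul, hcancel, one_smul, map_sum]
    exact Finset.sum_congr rfl fun s _ => by rw [_root_.map_smul, traceC]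
  -- Step 2: the full `a,b`-average for fixed `x`
  have stepx : ∀ x : QIdx d n,
      (∑ a : QIdx d n, ∑ b : QIdx d n,
        WX d n x * WZ d n a *
          (M (k - x) (WZ d n b * (WX d n (-x) * ρ * (WX d n (-x))ᴴ) * (WZ d n b)ᴴ)) *
          (WZ d n a)ᴴ * (WX d n x)ᴴ)
      = ∑ s : QIdx d n, ∑ t : QIdx d n,
          (chi d n s x * ((WZ d n s)ᴴ * ρ).trace
            * ((WZ d n t)ᴴ * M (k - x) (WZ d n s)).trace
            * (starRingEnd ℂ) (chi d n t x)) • WZ d n t := by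
    intro x
    have h1 : ∀ a : QIdx d n,
        (∑ b : QIdx d n, WX d n x * WZ d n a *
          (M (k - x) (WZ d n b * (WX d n (-x) * ρ * (WX d n (-x))ᴴ) * (WZ d n b)ᴴ)) *
          (WZ d n a)ᴴ * (WX d n x)ᴴ)
        = ∑ s : QIdx d n, (chi d n s x * ((WZ d n s)ᴴ * ρ).trace) •
            (WX d n x * (WZ d n a * M (k - x) (WZ d n s) * (WZ d n a)ᴴ) * (WX d n x)ᴴ) := by
      intro a
      rw [← Finset.sum_mul, ← Finset.sum_mul, ← Finset.mul_sum, inner x,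
        Finset.mul_sum, Finset.sum_mul, Finset.sum_mul]
      refine Finset.sum_congr rfl fun s _ => ?_
      rw [Matrix.mul_smul, Matrix.smul_mul, Matrix.smul_mul]
      congr 1
      noncomm_ring
    simp only [h1]
    rw [Finset.sum_comm]
    refine Finset.sum_congr rfl fun s _ => ?_
    rw [← Finset.smul_sum, ← Finset.sum_mul, ← Finset.mul_sum, zsum d n,
      diag_expand d n, smul_smul, hcancel, one_smul, Finset.mul_sum, Finset.sum_mul,
      Finset.smul_sum]
    refine Finset.sum_congr rfl fun t _ => ?_
    rw [Matrix.mul_smul, Matrix.smul_mul, xzx, smul_smul, smul_smul]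
  -- Step 3: the x-sum via character orthogonality and reindexing
  have key : ∀ s t : QIdx d n,
      (∑ x : QIdx d n, chi d n s x * ((WZ d n s)ᴴ * ρ).trace
        * ((WZ d n t)ᴴ * M (k - x) (WZ d n s)).trace * (starRingEnd ℂ) (chi d n t x))
      = (d : ℂ) ^ n * (chi d n k (s - t) * gpf d n M s t * ((WZ d n s)ᴴ * ρ).trace) := by
    intro s t
    have hterm : ∀ x : QIdx d n,
        chi d n s x * ((WZ d n s)ᴴ * ρ).trace
          * ((WZ d n t)ᴴ * M (k - x) (WZ d n s)).trace * (starRingEnd ℂ) (chi d n t x)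
        = ((WZ d n s)ᴴ * ρ).trace *
            (chi d n x (s - t) * ((WZ d n t)ᴴ * M (k - x) (WZ d n s)).trace) := by
      intro x
      rw [chi_comm d n s x, chi_comm d n t x]
      rw [show chi d n x s * ((WZ d n s)ᴴ * ρ).trace
            * ((WZ d n t)ᴴ * M (k - x) (WZ d n s)).trace * (starRingEnd ℂ) (chi d n x t)
          = ((WZ d n s)ᴴ * ρ).trace *
            ((chi d n x s * (starRingEnd ℂ) (chi d n x t))
              * ((WZ d n t)ᴴ * M (k - x) (WZ d n s)).trace) from by ring]
      rw [chi_mul_conj]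
    simp only [hterm]
    rw [← Finset.mul_sum]
    have hre : (∑ x : QIdx d n, chi d n x (s - t) * ((WZ d n t)ᴴ * M (k - x) (WZ d n s)).trace)
        = ∑ j : QIdx d n, chi d n (k - j) (s - t) * ((WZ d n t)ᴴ * M j (WZ d n s)).trace := by
      refine Fintype.sum_equiv (Equiv.subLeft k) _ _ (fun x => ?_)
      simp only [Equiv.subLeft_apply, sub_sub_cancel]
    rw [hre]
    have hsplit : ∀ j : QIdx d n, chi d n (k - j) (s - t)
        = chi d n k (s - t) * (starRingEnd ℂ) (chi d n j (s - t)) := by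
      intro j
      rw [chi_comm d n (k - j), show k - j = k + (-j) from sub_eq_add_neg _ _,
        chi_add_right, chi_comm d n (s - t) k, ← chi_conj d n (s - t) j,
        chi_comm d n (s - t) j]
    simp only [hsplit]
    have : (∑ j : QIdx d n, chi d n k (s - t) * (starRingEnd ℂ) (chi d n j (s - t))
            * ((WZ d n t)ᴴ * M j (WZ d n s)).trace)
        = chi d n k (s - t) * ∑ j : QIdx d n, (starRingEnd ℂ) (chi d n j (s - t))
            * ((WZ d n t)ᴴ * M j (WZ d n s)).trace := by
      rw [Finset.mul_sum]
      exact Finset.sum_congr rfl fun j _ => by ring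
    rw [this]
    rw [gpf]
    field_simp
  -- Step 4: assemble
  rw [rc]
  have r1 : (∑ a : QIdx d n, ∑ b : QIdx d n, ∑ x : QIdx d n,
      WX d n x * WZ d n a *
        (M (k - x) (WZ d n b * (WX d n (-x) * ρ * (WX d n (-x))ᴴ) * (WZ d n b)ᴴ)) *
        (WZ d n a)ᴴ * (WX d n x)ᴴ)
      = ∑ x : QIdx d n, ∑ a : QIdx d n, ∑ b : QIdx d n,
        WX d n x * WZ d n a *
          (M (k - x) (WZ d n b * (WX d n (-x) * ρ * (WX d n (-x))ᴴ) * (WZ d n b)ᴴ)) *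
          (WZ d n a)ᴴ * (WX d n x)ᴴ := by
    exact sum3_comm (fun a b x =>
      WX d n x * WZ d n a *
        (M (k - x) (WZ d n b * (WX d n (-x) * ρ * (WX d n (-x))ᴴ) * (WZ d n b)ᴴ)) *
        (WZ d n a)ᴴ * (WX d n x)ᴴ)
  rw [r1]
  have r2 : (∑ x : QIdx d n, ∑ a : QIdx d n, ∑ b : QIdx d n,
        WX d n x * WZ d n a *
          (M (k - x) (WZ d n b * (WX d n (-x) * ρ * (WX d n (-x))ᴴ) * (WZ d n b)ᴴ)) *
          (WZ d n a)ᴴ * (WX d n x)ᴴ)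
      = ∑ s : QIdx d n, ∑ t : QIdx d n,
          (∑ x : QIdx d n, chi d n s x * ((WZ d n s)ᴴ * ρ).trace
            * ((WZ d n t)ᴴ * M (k - x) (WZ d n s)).trace
            * (starRingEnd ℂ) (chi d n t x)) • WZ d n t := by
    rw [show (∑ x : QIdx d n, ∑ a : QIdx d n, ∑ b : QIdx d n,
        WX d n x * WZ d n a *
          (M (k - x) (WZ d n b * (WX d n (-x) * ρ * (WX d n (-x))ᴴ) * (WZ d n b)ᴴ)) *
          (WZ d n a)ᴴ * (WX d n x)ᴴ)
      = ∑ x : QIdx d n, ∑ s : QIdx d n, ∑ t : QIdx d n,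
          (chi d n s x * ((WZ d n s)ᴴ * ρ).trace
            * ((WZ d n t)ᴴ * M (k - x) (WZ d n s)).trace
            * (starRingEnd ℂ) (chi d n t x)) • WZ d n t from
      Finset.sum_congr rfl fun x _ => stepx x]
    rw [Finset.sum_comm]
    refine Finset.sum_congr rfl fun s _ => ?_
    rw [Finset.sum_comm]
    refine Finset.sum_congr rfl fun t _ => ?_
    rw [Finset.sum_smul]
  rw [r2]
  have r3 : (∑ s : QIdx d n, ∑ t : QIdx d n,
          (∑ x : QIdx d n, chi d n s x * ((WZ d n s)ᴴ * ρ).trace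
            * ((WZ d n t)ᴴ * M (k - x) (WZ d n s)).trace
            * (starRingEnd ℂ) (chi d n t x)) • WZ d n t)
      = (d : ℂ) ^ n • ∑ s : QIdx d n, ∑ t : QIdx d n,
          (chi d n k (s - t) * gpf d n M s t * ((WZ d n s)ᴴ * ρ).trace) • WZ d n t := by
    rw [Finset.smul_sum]
    refine Finset.sum_congr rfl fun s _ => ?_
    rw [Finset.smul_sum]
    refine Finset.sum_congr rfl fun t _ => ?_
    rw [key s t, mul_smul]
  rw [r3, smul_smul]
  congr 1
  rw [show 3 * n = 2 * n + n from by ring, pow_add]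
  field_simp
end

section
/- For every c ∈ (ℤ/dℤ)^n and every d^n × d^n complex matrix ρ, the character-weighted average of X-Weyl conjugations acts as an effective projector: Σ_{x ∈ (ℤ/dℤ)^n} χ_x(c) · X^x ρ (X^x)† = Σ_{b ∈ (ℤ/dℤ)^n} Tr((Z^c X^b)† ρ) · Z^c X^b. -/
open scoped BigOperators
open Matrix

noncomputable def om (d : ℕ) : ℂ := Complex.exp (2 * Real.pi * Complex.I / d)

lemma om_ne_zero (d : ℕ) : om d ≠ 0 := Complex.exp_ne_zero _

lemma om_pow_d (d : ℕ) [NeZero d] : om d ^ d = 1 := by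
  rw [om, ← Complex.exp_nat_mul]
  have hd : (d:ℂ) ≠ 0 := Nat.cast_ne_zero.mpr (NeZero.ne d)
  rw [show (d:ℂ) * (2 * Real.pi * Complex.I / d) = 2 * Real.pi * Complex.I by
    field_simp]
  exact Complex.exp_two_pi_mul_I

lemma om_zpow_congr (d : ℕ) [NeZero d] {p q : ℤ} (h : ((p : ZMod d) = (q : ZMod d))) :
    om d ^ p = om d ^ q := by
  have hdvd : (d:ℤ) ∣ p - q := by
    rw [← ZMod.intCast_zmod_eq_zero_iff_dvd]
    push_cast
    rw [h]; ring
  obtain ⟨k, hk⟩ := hdvd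
  have hp : p = q + d * k := by linarith
  rw [hp, zpow_add₀ (om_ne_zero d), _root_.zpow_mul, zpow_natCast, om_pow_d, _root_.one_zpow, mul_one]

lemma chi_eq (d n : ℕ) (z j : QIdx d n) :
    chi d n z j = om d ^ ((∑ i, (z i).val * (j i).val : ℕ) : ℤ) := by
  rw [chi, om, zpow_natCast, ← Complex.exp_nat_mul]
  congr 1
  ring

lemma conj_om (d : ℕ) : (starRingEnd ℂ) (om d) = (om d)⁻¹ := by
  rw [om, ← Complex.exp_conj, ← Complex.exp_neg]
  congr 1
  simp [map_div₀, Complex.conj_I, map_ofNat]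
  ring

lemma conj_chi (d n : ℕ) (z j : QIdx d n) :
    (starRingEnd ℂ) (chi d n z j) = om d ^ (-((∑ i, (z i).val * (j i).val : ℕ) : ℤ)) := by
  rw [chi_eq, map_zpow₀, conj_om, _root_.inv_zpow, ← _root_.zpow_neg]

lemma WX_apply (d n : ℕ) (x a b : QIdx d n) :
    WX d n x a b = if b = a - x then 1 else 0 := by
  rw [WX, Matrix.of_apply]
  refine if_congr ?_ rfl rfl
  constructor
  · intro h; rw [h]; simp
  · intro h; rw [h]; simp

lemma conjX_entry (d n : ℕ) [NeZero d] (x : QIdx d n) (ρ : QMat d n) (a e : QIdx d n) :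
    (WX d n x * ρ * (WX d n x)ᴴ) a e = ρ (a - x) (e - x) := by
  simp [Matrix.mul_apply, WX_apply, Matrix.conjTranspose_apply, ite_mul, mul_ite,
    Finset.sum_ite_eq, Finset.sum_ite_eq']

lemma ZX_entry (d n : ℕ) [NeZero d] (c b a e : QIdx d n) :
    (WZ d n c * WX d n b) a e = if a - e = b then chi d n c a else 0 := by
  rw [Matrix.mul_apply]
  rw [Finset.sum_eq_single a]
  · simp only [WZ, Matrix.diagonal_apply_eq, WX_apply, mul_ite, mul_zero, mul_one]
    refine if_congr ?_ rfl rfl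
    constructor
    · intro h; rw [h]; abel
    · intro h; rw [← h]; abel
  · intro x _ hx
    simp [WZ, Matrix.diagonal_apply_ne' _ hx]
  · simp

lemma trace_ZX (d n : ℕ) [NeZero d] (c b : QIdx d n) (ρ : QMat d n) :
    ((WZ d n c * WX d n b)ᴴ * ρ).trace
      = ∑ j : QIdx d n, (starRingEnd ℂ) (chi d n c (j + b)) * ρ (j + b) j := by
  rw [Matrix.trace, Finset.sum_congr rfl]
  intro j _
  rw [Matrix.diag_apply, Matrix.mul_apply]
  rw [Finset.sum_eq_single (j + b)]
  · rw [Matrix.conjTranspose_apply, ZX_entry]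
    rw [if_pos (by abel)]
    rfl
  · intro k _ hk
    rw [Matrix.conjTranspose_apply, ZX_entry, if_neg, star_zero, zero_mul]
    intro h
    exact hk (by rw [← h]; abel)
  · simp

lemma chi_key (d n : ℕ) [NeZero d] (c a e j : QIdx d n) :
    chi d n (e - j) c = chi d n c a * (starRingEnd ℂ) (chi d n c (j + (a - e))) := by
  rw [chi_eq, chi_eq, conj_chi, ← zpow_add₀ (om_ne_zero d)]
  apply om_zpow_congr
  push_cast [ZMod.natCast_val, ZMod.cast_id]
  rw [← sub_eq_add_neg, ← Finset.sum_sub_distrib]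
  refine Finset.sum_congr rfl fun i _ => ?_
  simp only [Pi.sub_apply, Pi.add_apply]
  ring

/-- The character-weighted average of `X`-Weyl conjugations is an
effective projector: `Σ_x χ_x(c) X^x ρ (X^x)† = Σ_b Tr((Z^c X^b)† ρ) Z^c X^b`. -/
theorem weighted_weylX_conj_eq_effective_projector
    (d n : ℕ) [NeZero d] (hd : 2 ≤ d) (hn : 1 ≤ n)
    (c : QIdx d n) (ρ : QMat d n) :
    ∑ x : QIdx d n, chi d n x c • (WX d n x * ρ * (WX d n x)ᴴ) =
      ∑ b : QIdx d n, (((WZ d n c * WX d n b)ᴴ * ρ).trace) • (WZ d n c * WX d n b) := by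
  ext a e
  simp only [Matrix.sum_apply, Matrix.smul_apply, conjX_entry, ZX_entry, smul_eq_mul,
    mul_ite, mul_zero]
  rw [Finset.sum_ite_eq]
  simp only [Finset.mem_univ, if_true]
  rw [trace_ZX, Finset.sum_mul]
  rw [← Fintype.sum_equiv (Equiv.subLeft e)
    (fun j => chi d n (e - j) c * ρ (a - (e - j)) (e - (e - j)))
    (fun x => chi d n x c * ρ (a - x) (e - x)) (fun j => rfl)]
  refine Finset.sum_congr rfl fun j _ => ?_
  rw [show a - (e - j) = j + (a - e) from by abel, show e - (e - j) = j from by abel,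
    chi_key d n c a e j]
  ring
end
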